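/- For every m ≥ 1 and every complex g with |g| < 1/4, the recursion X_1(g) = g, X_m(g) = g/(1 − X_{m−1}(g)) is well defined (i.e. X_{m−1}(g) ≠ 1 at every step), and one has |X_m(g)| ≤ X_m(|g|) < 1/2, where X_m(|g|) denotes the value of the recursion at the nonnegative real number |g|. -/

import Mathlib

open scoped Real BigOperators

/-- The generating functions `X_m` of rooted planar trees of height at most `m`, over `ℂ`:
`X_0 = 0`, `X_1(g) = g`, `X_m(g) = g/(1 - X_{m-1}(g))`. -/
noncomputable def Xc : ℕ → ℂ → ℂ
  | 0, _ => 0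
  | (m + 1), g => g / (1 - Xc m g)

/-- The same recursion at a real argument:
`X_0 = 0`, `X_1(t) = t`, `X_m(t) = t/(1 - X_{m-1}(t))`. -/
noncomputable def Xr : ℕ → ℝ → ℝ
  | 0, _ => 0
  | (m + 1), t => t / (1 - Xr m t)

/-! For `0 ≤ t ≤ 1/4` the map `x ↦ t / (1 - x)` sends `[0, 1/2)` into itself, because
`2t ≤ 1/2 < 1 - x`; so the real iterates stay in `[0, 1/2)`. In the complex recursion,
`‖1 - X‖ ≥ 1 - ‖X‖` shows inductively that the real iterates at `‖g‖` majorize the complex ones,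
which keeps every denominator away from `0`. -/

section Real

variable {t : ℝ}

theorem Xr_mem_Ico (ht₀ : 0 ≤ t) (ht : t ≤ 1 / 4) (m : ℕ) : Xr m t ∈ Set.Ico 0 (1 / 2) := by
  induction m with
  | zero => simp [Xr]
  | succ n ih =>
    obtain ⟨hx₀, hx⟩ := ih
    have hden : 0 < 1 - Xr n t := by linarith
    refine ⟨div_nonneg ht₀ hden.le, ?_⟩
    rw [Xr, div_lt_iff₀ hden]
    linarith

end Real

section Complex

variable {g : ℂ}

theorem norm_Xc_le_Xr (hg : ‖g‖ ≤ 1 / 4) (m : ℕ) : ‖Xc m g‖ ≤ Xr m ‖g‖ := by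
  induction m with
  | zero => simp [Xc, Xr]
  | succ n ih =>
    have hXr := Xr_mem_Ico (norm_nonneg g) hg n
    have hden : 0 < 1 - Xr n ‖g‖ := by linarith [hXr.2]
    have hden_le : 1 - Xr n ‖g‖ ≤ ‖1 - Xc n g‖ := by
      have := norm_sub_norm_le (1 : ℂ) (Xc n g)
      rw [norm_one] at this
      linarith
    rw [Xc, Xr, norm_div]
    exact div_le_div_of_nonneg_left (norm_nonneg g) hden hden_le

theorem Xc_ne_one (hg : ‖g‖ ≤ 1 / 4) (m : ℕ) : Xc m g ≠ 1 := by
  intro h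
  have := (norm_Xc_le_Xr hg m).trans_lt (Xr_mem_Ico (norm_nonneg g) hg m).2
  rw [h, norm_one] at this
  norm_num at this

end Complex

theorem Xc_well_defined_and_bounded (m : ℕ) (g : ℂ)
    (hg : ‖g‖ < 1 / 4) :
    (∀ k : ℕ, k < m → Xc k g ≠ 1) ∧
      ‖Xc m g‖ ≤ Xr m ‖g‖ ∧
      Xr m ‖g‖ < 1 / 2 :=
  ⟨fun k _ => Xc_ne_one hg.le k, norm_Xc_le_Xr hg.le m, (Xr_mem_Ico (norm_nonneg g) hg.le m).2⟩
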